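/- arXiv:1006.4536 — 3 statements merged into one kernel-verified Lean document; each statement's English description precedes it below -/
import Mathlib

section
/- There exist a universal constant c > 0 and d_0 such that for every d ≥ d_0 and every 0-extension f of the graph G_d with terminal set K, the 0-extension cost satisfies Σ_{(u,v)∈E} c(u,v) · D(f(u), f(v)) ≥ c · k · d^{3/2}, where k = 2^d. -/
open Finset

/-- Vertices of the `d`-dimensional Boolean hypercube. -/
abbrev Cube (d : ℕ) := Fin d → Bool

/-- Hamming distance between two Boolean strings. -/
def hamm {d : ℕ} (s t : Cube d) : ℕ := (Finset.univ.filter fun i => s i ≠ t i).card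

/-- The vertex set of the graph `G_d`: `Sum.inl s` is the hypercube vertex `y_s`,
`Sum.inr s` is the terminal `z_s`. -/
abbrev Vtx (d : ℕ) := Cube d ⊕ Cube d

/-- Edge capacities of the graph `G_d`: hypercube edges (Hamming distance `1`) have
capacity `1`, each terminal `z_s` is attached to `y_s` by an edge of capacity `√d`. -/
noncomputable def gCap (d : ℕ) : Vtx d → Vtx d → ℝ
  | Sum.inl s, Sum.inl t => if hamm s t = 1 then 1 else 0
  | Sum.inl s, Sum.inr t => if s = t then Real.sqrt d else 0
  | Sum.inr s, Sum.inl t => if s = t then Real.sqrt d else 0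
  | Sum.inr _, Sum.inr _ => 0

/-- The cut function of a capacitated graph: total capacity of edges crossing `A`.
(Each unordered crossing edge `{u,v}` with `u ∈ A`, `v ∉ A` is counted once.) -/
noncomputable def cutFun {V : Type*} [Fintype V] [DecidableEq V]
    (c : V → V → ℝ) (A : Finset V) : ℝ :=
  ∑ u ∈ A, ∑ v ∈ Aᶜ, c u v

/-- The terminal set `K = {z_s}` of `G_d`. -/
def Kset (d : ℕ) : Finset (Vtx d) := Finset.univ.image Sum.inr

/-- The terminal cut function: `h_K(U) = min { h(A) : A ∩ K = U }`. -/
noncomputable def termCut {V : Type*} [Fintype V] [DecidableEq V]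
    (c : V → V → ℝ) (K U : Finset V) : ℝ :=
  sInf {x : ℝ | ∃ A : Finset V, A ∩ K = U ∧ cutFun c A = x}

/-- The terminal cut function of `G_d`, for a set `A` of terminals (identified with
Boolean strings). -/
noncomputable def hK (d : ℕ) (A : Finset (Cube d)) : ℝ :=
  termCut (gCap d) (Kset d) (A.image Sum.inr)

/-- The metric `D` on terminals: `D(z_s, z_t) = Hamm(s,t) + 2√d` for `s ≠ t`. -/
noncomputable def Dmet (d : ℕ) (s t : Cube d) : ℝ :=
  if s = t then 0 else hamm s t + 2 * Real.sqrt d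

/-!
Write `g s` for the label `f (y_s)`. A hypercube edge whose endpoints get different labels costs
at least `2√d` and the pendant edge at `y_s` costs at least `√d · Hamm(s, g s)`, so the cost is
at least `√d · (#cut edges + Σ_s Hamm(s, g s))`, and it suffices to bound this bracket below by a
multiple of `d 2^d`. Each vertex with `Hamm(s, g s) > d/4` contributes `d/4` to the sum. The
other vertices fall into the classes `{s : g s = z}`, each inside the Hamming ball of radius `d/4`
around `z`, which has at most `2^(7d/8)` points. By the edge-isoperimetric inequality
`#∂A ≥ #A · (d - log₂ #A)` each class then has at least `d/8` boundary edges per vertex, and every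
such edge is either cut or ends at a vertex moved by more than `d/4`.
-/

open Real

theorem add_add_mul_logb_add_mul_logb_le {a b : ℝ} (ha : 0 ≤ a) (hb : 0 ≤ b) :
    a + b + a * logb 2 a + b * logb 2 b ≤ (a + b) * logb 2 (a + b) + |a - b| := by
  wlog hab : a ≤ b generalizing a b
  · have := this hb ha (le_of_not_ge hab)
    rw [add_comm b a, abs_sub_comm] at this
    linarith
  rw [abs_of_nonpos (sub_nonpos.mpr hab)]
  rcases ha.eq_or_lt with rfl | ha
  · simp only [zero_add, zero_mul, add_zero]
    linarith
  have hb : 0 < b := ha.trans_le hab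
  have h_small : a ≤ a * logb 2 ((a + b) / a) := by
    have : 1 ≤ logb 2 ((a + b) / a) := by
      rw [le_logb_iff_rpow_le one_lt_two (by positivity), rpow_one, le_div_iff₀ ha]
      linarith
    nlinarith
  have h_large : a ≤ b * logb 2 ((a + b) / b) := by
    have hx : a / b ≤ 1 := (div_le_one hb).mpr hab
    have : a / b ≤ logb 2 ((a + b) / b) := by
      rw [le_logb_iff_rpow_le one_lt_two (by positivity)]
      have := rpow_one_add_le_one_add_mul_self (s := 1) (by norm_num) (div_nonneg ha.le hb.le) hx
      rw [one_add_one_eq_two] at this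
      calc (2 : ℝ) ^ (a / b) ≤ 1 + a / b := by linarith
        _ = (a + b) / b := by field_simp; ring
    calc a = b * (a / b) := by field_simp
      _ ≤ b * logb 2 ((a + b) / b) := mul_le_mul_of_nonneg_left this hb.le
  rw [logb_div (by positivity) ha.ne'] at h_small
  rw [logb_div (by positivity) hb.ne'] at h_large
  nlinarith

namespace Hypercube

section Hamming

variable {ι : Type*} [Fintype ι] [DecidableEq ι]

theorem card_hammingDist_eq_one_le (t : ι → Bool) :
    #{s | hammingDist s t = 1} ≤ Fintype.card ι := by
  calc #{s | hammingDist s t = 1}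
      ≤ #(powersetCard 1 (univ : Finset ι)) := by
        refine card_le_card_of_injOn (fun s => ({i | s i ≠ t i} : Finset ι)) (fun s hs => ?_) ?_
        · simpa [mem_powersetCard, hammingDist] using hs
        · intro s _ s' _ h
          funext i
          have hi := congrArg (i ∈ ·) h
          simp only [mem_filter_univ] at hi
          revert hi
          cases s i <;> cases s' i <;> cases t i <;> decide
    _ = Fintype.card ι := by simp

/-- Weighting each point by `3` to the number of coordinates it shares with `z` gives total
mass `4 ^ card ι`, while points of the ball of radius `m` weigh at least `3 ^ (card ι - m)`. -/
theorem card_mul_three_pow_le_of_subset_ball (z : ι → Bool) (m : ℕ) (C : Finset (ι → Bool))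
    (hC : ∀ s ∈ C, hammingDist z s ≤ m) :
    #C * 3 ^ (Fintype.card ι - m) ≤ 4 ^ Fintype.card ι := by
  have weight : ∀ s : ι → Bool,
      3 ^ (Fintype.card ι - hammingDist z s) = ∏ i, if z i = s i then 3 else 1 := by
    intro s
    rw [prod_ite, prod_const_one, mul_one, prod_const, hammingDist, ← card_univ,
      ← card_filter_add_card_filter_not (s := univ) (fun i => z i = s i)]
    simp
  calc #C * 3 ^ (Fintype.card ι - m)
      = ∑ s ∈ C, 3 ^ (Fintype.card ι - m) := by rw [sum_const, smul_eq_mul]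
    _ ≤ ∑ s ∈ C, 3 ^ (Fintype.card ι - hammingDist z s) :=
        sum_le_sum fun s hs => Nat.pow_le_pow_right (by norm_num) (by have := hC s hs; omega)
    _ ≤ ∑ s, 3 ^ (Fintype.card ι - hammingDist z s) := sum_le_sum_of_subset (subset_univ C)
    _ = ∏ i, ∑ b, if z i = b then 3 else 1 := by
        simp only [weight, Fintype.prod_sum]
    _ = 4 ^ Fintype.card ι := by
        rw [← card_univ, ← prod_const]
        exact prod_congr rfl fun i _ => by cases z i <;> rfl

end Hamming

variable {d : ℕ}

def edgeBoundary (A : Finset (Cube d)) : Finset (Cube d × Cube d) :=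
  {p | hammingDist p.1 p.2 = 1 ∧ p.1 ∈ A ∧ p.2 ∉ A}

def layer (b : Bool) (A : Finset (Cube (d + 1))) : Finset (Cube d) := {x | Fin.cons b x ∈ A}

@[simp]
theorem mem_layer {b : Bool} {A : Finset (Cube (d + 1))} {x : Cube d} :
    x ∈ layer b A ↔ (Fin.cons b x : Cube (d + 1)) ∈ A := by
  simp [layer]

theorem hammingDist_cons (a b : Bool) (x y : Cube d) :
    hammingDist (Fin.cons a x : Cube (d + 1)) (Fin.cons b y) =
      (if a = b then 0 else 1) + hammingDist x y := by
  simp [hammingDist, card_filter, Fin.sum_univ_succ]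

theorem sum_cube_succ {M : Type*} [AddCommMonoid M] (F : Cube (d + 1) → M) :
    ∑ s, F s = ∑ b, ∑ x : Cube d, F (Fin.cons b x) := by
  rw [← (Fin.consEquiv fun _ => Bool).sum_comp, Fintype.sum_prod_type]
  rfl

theorem card_edgeBoundary_eq_sum (A : Finset (Cube d)) :
    #(edgeBoundary A) = ∑ s, ∑ t, if hammingDist s t = 1 ∧ s ∈ A ∧ t ∉ A then 1 else 0 := by
  rw [edgeBoundary, card_filter, ← univ_product_univ, sum_product]

theorem card_edgeBoundary_succ (A : Finset (Cube (d + 1))) :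
    #(edgeBoundary A) = #(edgeBoundary (layer true A)) + #(edgeBoundary (layer false A)) +
      #(layer true A \ layer false A) + #(layer false A \ layer true A) := by
  simp only [card_edgeBoundary_eq_sum, sum_cube_succ, hammingDist_cons, Fintype.sum_bool]
  have cross : ∀ P Q : Finset (Cube d),
      (∑ x, ∑ y, if 1 + hammingDist x y = 1 ∧ x ∈ P ∧ y ∉ Q then 1 else 0) = #(P \ Q) := by
    intro P Q
    simp only [Nat.add_eq_left, hammingDist_eq_zero, ite_and, sum_ite_eq, mem_univ, if_true]
    rw [← sum_filter, ← sum_filter, filter_filter, ← card_eq_sum_ones]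
    congr 1
    ext x
    simp
  simp only [← mem_layer, if_true, Bool.true_eq_false, Bool.false_eq_true, if_false, zero_add,
    sum_add_distrib, cross, ← card_edgeBoundary_eq_sum]
  ring

theorem card_eq_card_layer_add_card_layer (A : Finset (Cube (d + 1))) :
    #A = #(layer true A) + #(layer false A) := by
  calc #A = ∑ s, if s ∈ A then 1 else 0 := by simp
    _ = #(layer true A) + #(layer false A) := by
      rw [sum_cube_succ, Fintype.sum_bool]
      simp only [layer, card_filter]

theorem card_mul_sub_logb_le_card_edgeBoundary :
    ∀ {d : ℕ} (A : Finset (Cube d)), (#A : ℝ) * (d - logb 2 #A) ≤ #(edgeBoundary A)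
  | 0, A => by
    have : #A ≤ 1 := by simpa using card_le_univ A
    interval_cases h : #A <;> simp
  | d + 1, A => by
    -- Split along the first coordinate: besides the boundaries of the two layers, `∂A` contains
    -- the edges between them that leave `A`, at least `|#A₁ - #A₀|` many.
    set a := #(layer true A)
    set b := #(layer false A)
    have h_true := card_mul_sub_logb_le_card_edgeBoundary (layer true A)
    have h_false := card_mul_sub_logb_le_card_edgeBoundary (layer false A)
    have h_ab : (a : ℝ) ≤ #(layer true A \ layer false A) + b := by
      exact_mod_cast card_le_card_sdiff_add_card
    have h_ba : (b : ℝ) ≤ #(layer false A \ layer true A) + a := by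
      exact_mod_cast card_le_card_sdiff_add_card
    have h_abs : |(a : ℝ) - b| ≤
        #(layer true A \ layer false A) + #(layer false A \ layer true A) :=
      abs_sub_le_iff.mpr ⟨by linarith [(#(layer false A \ layer true A)).cast_nonneg (α := ℝ)],
        by linarith [(#(layer true A \ layer false A)).cast_nonneg (α := ℝ)]⟩
    have h_num := add_add_mul_logb_add_mul_logb_le (a := a) (b := b) (by positivity) (by positivity)
    rw [card_edgeBoundary_succ, card_eq_card_layer_add_card_layer]
    push_cast
    linarith

theorem card_pow_eight_le_of_subset_ball (z : Cube d) (C : Finset (Cube d))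
    (hC : ∀ s ∈ C, hammingDist z s ≤ d / 4) : #C ^ 8 ≤ 2 ^ (7 * d) := by
  have h_ball := card_mul_three_pow_le_of_subset_ball z (d / 4) C hC
  rw [Fintype.card_fin] at h_ball
  have h_upper : #C ^ 8 * 3 ^ (8 * (d - d / 4)) ≤ 2 ^ (16 * d) :=
    calc #C ^ 8 * 3 ^ (8 * (d - d / 4)) = (#C * 3 ^ (d - d / 4)) ^ 8 := by ring
      _ ≤ (4 ^ d) ^ 8 := Nat.pow_le_pow_left h_ball 8
      _ = 2 ^ (16 * d) := by rw [← pow_mul, show 4 = 2 ^ 2 from rfl, ← pow_mul]; ring_nf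
  have h_lower : 2 ^ (9 * d) ≤ 3 ^ (8 * (d - d / 4)) :=
    calc 2 ^ (9 * d) = 512 ^ d := by rw [pow_mul]; norm_num
      _ ≤ 729 ^ d := Nat.pow_le_pow_left (by norm_num) d
      _ = 3 ^ (6 * d) := by rw [pow_mul]; norm_num
      _ ≤ 3 ^ (8 * (d - d / 4)) := Nat.pow_le_pow_right (by norm_num) (by omega)
  refine Nat.le_of_mul_le_mul_right (c := 2 ^ (9 * d)) ?_ (by positivity)
  calc #C ^ 8 * 2 ^ (9 * d) ≤ #C ^ 8 * 3 ^ (8 * (d - d / 4)) := Nat.mul_le_mul_left _ h_lower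
    _ ≤ 2 ^ (16 * d) := h_upper
    _ = 2 ^ (7 * d) * 2 ^ (9 * d) := by rw [← pow_add]; ring_nf

theorem card_mul_le_card_edgeBoundary_of_subset_ball (z : Cube d) (C : Finset (Cube d))
    (hC : ∀ s ∈ C, hammingDist z s ≤ d / 4) : #C * d ≤ 8 * #(edgeBoundary C) := by
  rcases C.eq_empty_or_nonempty with rfl | hne
  · simp
  have h_log : logb 2 #C ≤ 7 * d / 8 := by
    have h_pow : ((#C : ℝ)) ^ 8 ≤ 2 ^ (7 * d) := by
      exact_mod_cast card_pow_eight_le_of_subset_ball z C hC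
    have := logb_le_logb_of_le one_lt_two (by positivity) h_pow
    rw [logb_pow, logb_pow, logb_self_eq_one one_lt_two] at this
    push_cast at this
    linarith
  have h_iso := card_mul_sub_logb_le_card_edgeBoundary C
  have h_card : (0 : ℝ) ≤ #C := by positivity
  have : (#C : ℝ) * d ≤ 8 * #(edgeBoundary C) := by nlinarith
  exact_mod_cast this

def cutEdges (g : Cube d → Cube d) : Finset (Cube d × Cube d) :=
  {p | hammingDist p.1 p.2 = 1 ∧ g p.1 ≠ g p.2}

theorem card_edges_into_le (B : Finset (Cube d)) :
    #{p : Cube d × Cube d | hammingDist p.1 p.2 = 1 ∧ p.2 ∈ B} ≤ d * #B := by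
  refine card_le_mul_card_image_of_maps_to (f := Prod.snd) (fun p hp => (mem_filter.mp hp).2.2) d
    fun t _ => ?_
  calc #{p ∈ {p : Cube d × Cube d | hammingDist p.1 p.2 = 1 ∧ p.2 ∈ B} | p.2 = t}
      ≤ #{s | hammingDist s t = 1} := by
        refine card_le_card_of_injOn Prod.fst (fun p hp => ?_) fun p hp q hq h => ?_
        · simp only [mem_filter, mem_univ, true_and, coe_filter] at hp ⊢
          rw [← hp.2]
          exact hp.1.1
        · simp only [coe_filter, mem_filter, mem_univ, true_and] at hp hq
          exact Prod.ext h (hp.2.trans hq.2.symm)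
    _ ≤ d := by simpa using card_hammingDist_eq_one_le t

theorem sum_card_edgeBoundary_fibers_le (g : Cube d → Cube d) (G : Finset (Cube d)) :
    ∑ z, #(edgeBoundary {s ∈ G | g s = z}) ≤ #(cutEdges g) + d * #Gᶜ := by
  have h_disj : ((univ : Finset (Cube d)) : Set (Cube d)).PairwiseDisjoint
      fun z => edgeBoundary {s ∈ G | g s = z} := by
    intro z _ z' _ hzz'
    refine disjoint_left.mpr fun p hp hp' => hzz' ?_
    simp only [edgeBoundary, mem_filter, mem_univ, true_and] at hp hp'
    exact hp.2.1.2.symm.trans hp'.2.1.2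
  have h_cover : univ.biUnion (fun z => edgeBoundary {s ∈ G | g s = z}) ⊆
      cutEdges g ∪ ({p | hammingDist p.1 p.2 = 1 ∧ p.2 ∈ Gᶜ} : Finset (Cube d × Cube d)) := by
    intro p hp
    simp only [mem_biUnion, edgeBoundary, cutEdges, mem_filter, mem_univ, true_and,
      mem_union, mem_compl] at hp ⊢
    obtain ⟨z, h_adj, ⟨-, rfl⟩, h_out⟩ := hp
    by_cases h : g p.1 = g p.2
    · exact Or.inr ⟨h_adj, fun h_in => h_out ⟨h_in, h.symm⟩⟩
    · exact Or.inl ⟨h_adj, h⟩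
  calc ∑ z, #(edgeBoundary {s ∈ G | g s = z})
      = #(univ.biUnion fun z => edgeBoundary {s ∈ G | g s = z}) := (card_biUnion h_disj).symm
    _ ≤ #(cutEdges g ∪ ({p | hammingDist p.1 p.2 = 1 ∧ p.2 ∈ Gᶜ} : Finset (Cube d × Cube d))) :=
        card_le_card h_cover
    _ ≤ #(cutEdges g) + d * #Gᶜ :=
        (card_union_le _ _).trans (by gcongr; exact card_edges_into_le _)

theorem mul_two_pow_le_card_cutEdges_add_sum_hammingDist (g : Cube d → Cube d) :
    d * 2 ^ d ≤ 36 * (#(cutEdges g) + ∑ s, hammingDist s (g s)) := by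
  set G : Finset (Cube d) := {s | hammingDist s (g s) ≤ d / 4}
  set moved := ∑ s, hammingDist s (g s)
  have h_moved : (d / 4 + 1) * #Gᶜ ≤ moved := by
    rw [mul_comm, ← smul_eq_mul, ← sum_const]
    refine (sum_le_sum fun s hs => ?_).trans (sum_le_sum_of_subset (subset_univ Gᶜ))
    simp only [G, mem_compl, mem_filter, mem_univ, true_and] at hs
    omega
  have h_partition : ∑ z, #{s ∈ G | g s = z} + #Gᶜ = 2 ^ d := by
    rw [← card_eq_sum_card_fiberwise (t := univ) (fun s _ => mem_univ (g s)),
      card_add_card_compl, Fintype.card_fun, Fintype.card_bool, Fintype.card_fin]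
  have h_class : ∀ z, #{s ∈ G | g s = z} * d ≤ 8 * #(edgeBoundary {s ∈ G | g s = z}) := by
    refine fun z => card_mul_le_card_edgeBoundary_of_subset_ball z _ fun s hs => ?_
    simp only [G, mem_filter, mem_univ, true_and] at hs
    rw [← hs.2, hammingDist_comm]
    exact hs.1
  have h_account := sum_card_edgeBoundary_fibers_le g G
  have h_bad : d * #Gᶜ ≤ 4 * moved :=
    calc d * #Gᶜ ≤ 4 * (d / 4 + 1) * #Gᶜ := Nat.mul_le_mul_right _ (by omega)
      _ ≤ 4 * moved := by rw [mul_assoc]; exact Nat.mul_le_mul_left 4 h_moved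
  calc d * 2 ^ d = ∑ z, #{s ∈ G | g s = z} * d + d * #Gᶜ := by
        rw [← h_partition, ← sum_mul]; ring
    _ ≤ 8 * ∑ z, #(edgeBoundary {s ∈ G | g s = z}) + d * #Gᶜ := by
        rw [mul_sum]; exact Nat.add_le_add_right (sum_le_sum fun z _ => h_class z) _
    _ ≤ 36 * (#(cutEdges g) + moved) := by omega

end Hypercube

open Hypercube

noncomputable def zeroExtensionCost (d : ℕ) (f : Vtx d → Cube d) : ℝ :=
  (1 / 2) * ∑ u, ∑ v, gCap d u v * Dmet d (f u) (f v)

section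

variable {d : ℕ}

theorem hammingDist_le_Dmet (a b : Cube d) : (hammingDist a b : ℝ) ≤ Dmet d a b := by
  unfold Dmet
  split_ifs with h
  · simp [h]
  · exact le_add_of_nonneg_right (by positivity)

theorem Dmet_nonneg (a b : Cube d) : 0 ≤ Dmet d a b :=
  (Nat.cast_nonneg _).trans (hammingDist_le_Dmet a b)

theorem two_mul_sqrt_le_Dmet {a b : Cube d} (h : a ≠ b) : 2 * √d ≤ Dmet d a b := by
  rw [Dmet, if_neg h]
  exact le_add_of_nonneg_left (Nat.cast_nonneg _)

theorem sqrt_mul_le_zeroExtensionCost (f : Vtx d → Cube d) (hf : ∀ s, f (Sum.inr s) = s) :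
    √d * (#(cutEdges (f ∘ Sum.inl)) + ∑ s, hammingDist s (f (Sum.inl s))) ≤
      zeroExtensionCost d f := by
  have h_cut : 2 * √d * #(cutEdges (f ∘ Sum.inl)) ≤ ∑ s, ∑ t,
      if hamm s t = 1 then Dmet d (f (Sum.inl s)) (f (Sum.inl t)) else 0 := by
    rw [cutEdges, card_filter, ← univ_product_univ, sum_product]
    push_cast
    simp only [Function.comp_apply]
    rw [mul_sum]
    refine sum_le_sum fun s _ => ?_
    rw [mul_sum]
    refine sum_le_sum fun t _ => ?_
    split_ifs with h_edge h_adj h_adj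
    · simpa using two_mul_sqrt_le_Dmet h_edge.2
    · exact absurd h_edge.1 h_adj
    · simpa using Dmet_nonneg _ _
    · simp
  have h_out : ∑ s, √d * hammingDist s (f (Sum.inl s)) ≤ ∑ s, √d * Dmet d (f (Sum.inl s)) s :=
    sum_le_sum fun s _ => mul_le_mul_of_nonneg_left
      (hammingDist_comm s (f (Sum.inl s)) ▸ hammingDist_le_Dmet _ _) (sqrt_nonneg _)
  have h_in : ∑ s, √d * hammingDist s (f (Sum.inl s)) ≤ ∑ s, √d * Dmet d s (f (Sum.inl s)) :=
    sum_le_sum fun s _ => mul_le_mul_of_nonneg_left (hammingDist_le_Dmet _ _) (sqrt_nonneg _)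
  rw [zeroExtensionCost]
  simp only [Fintype.sum_sum_type, gCap, hf, ite_mul, one_mul, zero_mul, sum_ite_eq, mem_univ,
    if_true, sum_const_zero, add_zero, sum_add_distrib]
  push_cast
  rw [mul_add, mul_sum]
  linarith

end

/-- There are a universal constant `c > 0` and `d₀` such that for every
`d ≥ d₀` and every `0`-extension `f` of `G_d`, the `0`-extension cost
`Σ_{(u,v) ∈ E} c(u,v) · D(f(u), f(v))` is at least `c · k · d^{3/2}` where `k = 2^d`.
(The sum over ordered pairs is halved so each edge is counted once.) -/
theorem zero_extension_cost_lower_bound :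
    ∃ c : ℝ, 0 < c ∧ ∃ d0 : ℕ, ∀ d : ℕ, d0 ≤ d →
      ∀ f : Vtx d → Cube d, (∀ s : Cube d, f (Sum.inr s) = s) →
        c * (2 : ℝ) ^ d * (d : ℝ) ^ ((3 : ℝ) / 2) ≤
          (1 / 2) * ∑ u : Vtx d, ∑ v : Vtx d, gCap d u v * Dmet d (f u) (f v) := by
  refine ⟨1 / 36, by norm_num, 0, fun d _ f hf => ?_⟩
  have h_comb : (d * 2 ^ d : ℝ) ≤
      36 * (#(cutEdges (f ∘ Sum.inl)) + ∑ s, hammingDist s (f (Sum.inl s))) := by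
    exact_mod_cast mul_two_pow_le_card_cutEdges_add_sum_hammingDist (f ∘ Sum.inl)
  have h_rpow : (d : ℝ) ^ ((3 : ℝ) / 2) = d * √d := by
    rw [show (3 : ℝ) / 2 = 1 + 1 / 2 by norm_num, rpow_add' (Nat.cast_nonneg _) (by norm_num),
      rpow_one, sqrt_eq_rpow]
  calc 1 / 36 * 2 ^ d * (d : ℝ) ^ ((3 : ℝ) / 2) = √d * (d * 2 ^ d / 36) := by rw [h_rpow]; ring
    _ ≤ _ := mul_le_mul_of_nonneg_left (by linarith) (sqrt_nonneg _)
    _ ≤ _ := sqrt_mul_le_zeroExtensionCost f hf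
end

section
/- Let G = (V,E) be a finite graph with capacities c and terminal set K ⊆ V, and let Γ be the group of permutations J of V satisfying c(J(u),J(v)) = c(u,v) for all u,v and J(K) = K. If there exists a cut-sparsifier for (G,K) of quality at most α, then there exists a cut-sparsifier H' for (G,K) of quality at most α that is invariant under Γ, i.e., c_{H'}(J(a), J(b)) = c_{H'}(a,b) for every J ∈ Γ and all a, b ∈ K. -/
open Finset

/-! Averaging a sparsifier over the finite group `Γ` of symmetries of `(G, K)` gives a
`Γ`-invariant graph. Each symmetry `J` preserves the terminal cut function, so the
`J`-translate of the sparsifier is again a sparsifier of the same quality; cut functions are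
linear in the capacities, so both bounds survive the averaging. -/

open scoped BigOperators

section Cut

variable {V : Type*} [Fintype V] [DecidableEq V]

lemma compl_image_perm (J : Equiv.Perm V) (U : Finset V) : (U.image J)ᶜ = Uᶜ.image J := by
  rw [compl_eq_univ_sdiff, compl_eq_univ_sdiff, image_sdiff _ _ J.injective, image_univ_equiv]

lemma cutFun_comp_perm (f : V → V → ℝ) (J : Equiv.Perm V) (U : Finset V) :
    cutFun (fun a b => f (J a) (J b)) U = cutFun f (U.image J) := by
  simp only [cutFun, compl_image_perm, sum_image fun x _ y _ h => J.injective h]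

lemma cutFun_expect {ι : Type*} [Fintype ι] (f : ι → V → V → ℝ) (U : Finset V) :
    cutFun (fun a b => 𝔼 i, f i a b) U = 𝔼 i, cutFun (f i) U := by
  simp only [cutFun, expect_sum_comm]

end Cut

section NetworkAut

variable {V : Type*} [DecidableEq V]

def networkAut (c : V → V → ℝ) (K : Finset V) : Subgroup (Equiv.Perm V) where
  carrier := {J | (∀ u v, c (J u) (J v) = c u v) ∧ K.image J = K}
  one_mem' := by simp
  mul_mem' := by
    rintro J₁ J₂ ⟨hc₁, hK₁⟩ ⟨hc₂, hK₂⟩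
    refine ⟨fun u v => (hc₁ _ _).trans (hc₂ u v), ?_⟩
    rw [Equiv.Perm.coe_mul, ← image_image, hK₂, hK₁]
  inv_mem' := by
    rintro J ⟨hc, hK⟩
    refine ⟨fun u v => ?_, ?_⟩
    · rw [← hc, Equiv.Perm.coe_inv, J.apply_symm_apply, J.apply_symm_apply]
    · conv_lhs => rw [← hK]
      rw [image_image, Equiv.Perm.coe_inv, Equiv.symm_comp_self, image_id]

variable {c : V → V → ℝ} {K : Finset V} {J : Equiv.Perm V}

lemma mem_networkAut :
    J ∈ networkAut c K ↔ (∀ u v, c (J u) (J v) = c u v) ∧ K.image J = K := Iff.rfl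

lemma apply_mem_iff_of_mem_networkAut (hJ : J ∈ networkAut c K) (a : V) :
    J a ∈ K ↔ a ∈ K := by
  conv_lhs => rw [← hJ.2]
  exact J.injective.mem_finset_image

lemma image_subset_of_mem_networkAut (hJ : J ∈ networkAut c K) {U : Finset V} (hU : U ⊆ K) :
    U.image J ⊆ K :=
  (image_subset_image hU).trans hJ.2.le

lemma cutFun_image_of_mem_networkAut [Fintype V] (hJ : J ∈ networkAut c K) (A : Finset V) :
    cutFun c (A.image J) = cutFun c A := by
  rw [← cutFun_comp_perm]
  simp only [hJ.1]

lemma termCut_image_of_mem_networkAut [Fintype V] (hJ : J ∈ networkAut c K) (U : Finset V) :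
    termCut c K (U.image J) = termCut c K U := by
  have translate : ∀ J ∈ networkAut c K, ∀ W : Finset V,
      {x | ∃ A, A ∩ K = W ∧ cutFun c A = x} ⊆
        {x | ∃ A, A ∩ K = W.image J ∧ cutFun c A = x} := by
    rintro J hJ W _ ⟨A, hAK, rfl⟩
    refine ⟨A.image J, ?_, cutFun_image_of_mem_networkAut hJ A⟩
    rw [← hAK, image_inter _ _ J.injective, hJ.2]
  refine congrArg sInf (Set.Subset.antisymm ?_ (translate J hJ U))
  have h := translate J⁻¹ (inv_mem hJ) (U.image J)
  rwa [image_image, Equiv.Perm.coe_inv, Equiv.symm_comp_self, image_id] at h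

end NetworkAut

section Symmetrize

variable {V : Type*} (Γ : Subgroup (Equiv.Perm V)) [Fintype Γ]

noncomputable def symmetrize (f : V → V → ℝ) (a b : V) : ℝ :=
  𝔼 J : Γ, f ((J : Equiv.Perm V) a) ((J : Equiv.Perm V) b)

variable {Γ} {f : V → V → ℝ}

lemma symmetrize_comm (hf : ∀ a b, f a b = f b a) (a b : V) :
    symmetrize Γ f a b = symmetrize Γ f b a :=
  expect_congr rfl fun _ _ => hf _ _

lemma symmetrize_nonneg (hf : ∀ a b, 0 ≤ f a b) (a b : V) : 0 ≤ symmetrize Γ f a b :=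
  expect_nonneg fun _ _ => hf _ _

lemma exists_ne_zero_of_symmetrize_ne_zero {a b : V} (h : symmetrize Γ f a b ≠ 0) :
    ∃ J : Γ, f ((J : Equiv.Perm V) a) ((J : Equiv.Perm V) b) ≠ 0 := by
  obtain ⟨J, -, hJ⟩ := exists_ne_zero_of_expect_ne_zero h
  exact ⟨J, hJ⟩

lemma symmetrize_apply_apply {J₀ : Equiv.Perm V} (hJ₀ : J₀ ∈ Γ) (a b : V) :
    symmetrize Γ f (J₀ a) (J₀ b) = symmetrize Γ f a b :=
  Fintype.expect_equiv (Equiv.mulRight ⟨J₀, hJ₀⟩) _ _ fun _ => rfl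

lemma cutFun_symmetrize [Fintype V] [DecidableEq V] (U : Finset V) :
    cutFun (symmetrize Γ f) U = 𝔼 J : Γ, cutFun f (U.image (J : Equiv.Perm V)) :=
  (cutFun_expect _ U).trans (expect_congr rfl fun J _ => cutFun_comp_perm f J U)

end Symmetrize

theorem invariant_sparsifier_exists_general
    {V : Type*} [Fintype V] [DecidableEq V]
    (c : V → V → ℝ)
    (K : Finset V) (α : ℝ)
    (hex : ∃ cH : V → V → ℝ,
      (∀ a b, cH a b = cH b a) ∧ (∀ a b, 0 ≤ cH a b) ∧
      (∀ a b, cH a b ≠ 0 → a ∈ K ∧ b ∈ K) ∧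
      (∀ U ⊆ K, termCut c K U ≤ cutFun cH U ∧ cutFun cH U ≤ α * termCut c K U)) :
    ∃ cH' : V → V → ℝ,
      (∀ a b, cH' a b = cH' b a) ∧ (∀ a b, 0 ≤ cH' a b) ∧
      (∀ a b, cH' a b ≠ 0 → a ∈ K ∧ b ∈ K) ∧
      (∀ U ⊆ K, termCut c K U ≤ cutFun cH' U ∧ cutFun cH' U ≤ α * termCut c K U) ∧
      (∀ J : Equiv.Perm V, (∀ u v, c (J u) (J v) = c u v) → K.image J = K →
        ∀ a ∈ K, ∀ b ∈ K, cH' (J a) (J b) = cH' a b) := by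
  classical
  obtain ⟨cH, hsymm, hnonneg, hsupp, hquality⟩ := hex
  refine ⟨symmetrize (networkAut c K) cH, symmetrize_comm hsymm, symmetrize_nonneg hnonneg,
    fun a b hab => ?_, fun U hU => ?_,
    fun J hc hK a _ b _ => symmetrize_apply_apply (mem_networkAut.2 ⟨hc, hK⟩) a b⟩
  · obtain ⟨J, hJ⟩ := exists_ne_zero_of_symmetrize_ne_zero hab
    have hJK := hsupp _ _ hJ
    exact ⟨(apply_mem_iff_of_mem_networkAut J.2 a).1 hJK.1,
      (apply_mem_iff_of_mem_networkAut J.2 b).1 hJK.2⟩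
  · have translate (J : networkAut c K) := termCut_image_of_mem_networkAut J.2 U ▸
      hquality _ (image_subset_of_mem_networkAut J.2 hU)
    rw [cutFun_symmetrize]
    exact ⟨le_expect univ_nonempty fun J _ => (translate J).1,
      expect_le univ_nonempty fun J _ => (translate J).2⟩

/-- If `(G,K)` admits a cut-sparsifier of quality at most `α`, then it
admits one that is invariant under every capacity-preserving permutation of `V` that
maps `K` to `K`. -/
theorem invariant_sparsifier_exists
    {V : Type*} [Fintype V] [DecidableEq V]
    (c : V → V → ℝ) (hsym : ∀ u v, c u v = c v u) (hnn : ∀ u v, 0 ≤ c u v)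
    (K : Finset V) (α : ℝ)
    (hex : ∃ cH : V → V → ℝ,
      (∀ a b, cH a b = cH b a) ∧ (∀ a b, 0 ≤ cH a b) ∧
      (∀ a b, cH a b ≠ 0 → a ∈ K ∧ b ∈ K) ∧
      (∀ U ⊆ K, termCut c K U ≤ cutFun cH U ∧ cutFun cH U ≤ α * termCut c K U)) :
    ∃ cH' : V → V → ℝ,
      (∀ a b, cH' a b = cH' b a) ∧ (∀ a b, 0 ≤ cH' a b) ∧
      (∀ a b, cH' a b ≠ 0 → a ∈ K ∧ b ∈ K) ∧
      (∀ U ⊆ K, termCut c K U ≤ cutFun cH' U ∧ cutFun cH' U ≤ α * termCut c K U) ∧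
      (∀ J : Equiv.Perm V, (∀ u v, c (J u) (J v) = c u v) → K.image J = K →
        ∀ a ∈ K, ∀ b ∈ K, cH' (J a) (J b) = cH' a b) :=
  invariant_sparsifier_exists_general c K α hex
end

section
/- If α is the minimum quality over all cut-sparsifiers for the graph G_d with terminal set K, then there exists a cut-sparsifier H for (G_d, K) of quality at most α whose capacities depend only on Hamming distance: c_H(z_s, z_t) = c_H(z_{s'}, z_{t'}) whenever Hamm(s,t) = Hamm(s',t'). -/
/-!
Symmetrize a given sparsifier over the group of Hamming isometries of the cube. Each such
isometry `σ` extends to an automorphism of `G_d` fixing `K` setwise, so `h_K(σ U) = h_K(U)`;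
hence every cut of the averaged sparsifier is an average of cuts `h'(σ U)` of the original one,
all lying in `[h_K(U), α h_K(U)]`. The averaged capacities are invariant under the group, which
acts transitively on pairs of points at a given Hamming distance.
-/

open Finset

open scoped Pointwise

section Cuts

variable {G V : Type*} [Group G] [MulAction G V] [Fintype V] [DecidableEq V]

lemma Finset.smul_finset_compl (g : G) (A : Finset V) : (g • A)ᶜ = g • Aᶜ := by
  rw [compl_eq_univ_sdiff, compl_eq_univ_sdiff, smul_finset_sdiff, smul_finset_univ]

lemma cutFun_smul (c : V → V → ℝ) (g : G) (A : Finset V) :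
    cutFun c (g • A) = ∑ u ∈ A, ∑ v ∈ Aᶜ, c (g • u) (g • v) := by
  rw [cutFun, Finset.smul_finset_compl, smul_finset_def, smul_finset_def,
    sum_image (MulAction.injective g).injOn]
  simp only [sum_image (MulAction.injective g).injOn]

lemma termCut_smul {c : V → V → ℝ} {K : Finset V} {g : G}
    (hc : ∀ u v, c (g • u) (g • v) = c u v) (hK : g • K = K) (U : Finset V) :
    termCut c K (g • U) = termCut c K U := by
  have hcut (A : Finset V) : cutFun c (g • A) = cutFun c A := by
    simp only [cutFun_smul, hc]
    rfl
  have hinter (A : Finset V) : g • A ∩ K = g • U ↔ A ∩ K = U := by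
    rw [← hK, ← smul_finset_inter, hK, smul_left_cancel_iff]
  unfold termCut
  congr 1
  ext x
  rw [Set.mem_ofPred_eq, (MulAction.toPerm g : Equiv.Perm (Finset V)).symm.exists_congr_left]
  simp only [Equiv.symm_symm, MulAction.toPerm_apply, hinter, hcut, Set.mem_ofPred_eq]

end Cuts

lemma Finset.image_inr_smul {M α β : Type*} [SMul M α] [SMul M β] [DecidableEq β]
    [DecidableEq (α ⊕ β)] (g : M) (U : Finset β) :
    (g • U).image Sum.inr = g • U.image (Sum.inr : β → α ⊕ β) :=
  image_smul_comm _ _ _ fun _ => rfl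

lemma sum_div_card_mem_Icc {ι : Type*} [Fintype ι] [Nonempty ι] {f : ι → ℝ} {a b : ℝ}
    (hf : ∀ i, f i ∈ Set.Icc a b) : (∑ i, f i) / Fintype.card ι ∈ Set.Icc a b := by
  have hcard : (0 : ℝ) < Fintype.card ι := by exact_mod_cast Fintype.card_pos
  rw [Set.mem_Icc, le_div_iff₀ hcard, div_le_iff₀ hcard, mul_comm a, mul_comm b]
  exact ⟨by simpa using card_nsmul_le_sum univ f a fun i _ => (hf i).1,
    by simpa using sum_le_card_nsmul univ f b fun i _ => (hf i).2⟩

section Average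

variable (G : Type*) {W : Type*} [Group G] [Fintype G] [MulAction G W]

noncomputable def averageCap (c : W → W → ℝ) (s t : W) : ℝ :=
  (∑ g : G, c (g • s) (g • t)) / Fintype.card G

variable {G}

lemma averageCap_comm {c : W → W → ℝ} (hc : ∀ s t, c s t = c t s) (s t : W) :
    averageCap G c s t = averageCap G c t s := by
  simp only [averageCap, hc (_ • s)]

lemma averageCap_nonneg {c : W → W → ℝ} (hc : ∀ s t, 0 ≤ c s t) (s t : W) :
    0 ≤ averageCap G c s t :=
  div_nonneg (sum_nonneg fun _ _ => hc _ _) (Nat.cast_nonneg _)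

lemma averageCap_smul (c : W → W → ℝ) (g₀ : G) (s t : W) :
    averageCap G c (g₀ • s) (g₀ • t) = averageCap G c s t := by
  simp only [averageCap, smul_smul]
  congr 1
  exact Fintype.sum_equiv (Equiv.mulRight g₀) _ _ fun _ => rfl

lemma cutFun_averageCap [Fintype W] [DecidableEq W] (c : W → W → ℝ) (U : Finset W) :
    cutFun (averageCap G c) U = (∑ g : G, cutFun c (g • U)) / Fintype.card G := by
  rw [cutFun]
  simp only [cutFun_smul, averageCap, ← sum_div]
  congr 1
  exact (sum_congr rfl fun _ _ => sum_comm).trans sum_comm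

end Average

def preservingSubgroup {α β : Type*} (f : α → α → β) : Subgroup (Equiv.Perm α) where
  carrier := {σ | ∀ a b, f (σ a) (σ b) = f a b}
  mul_mem' hσ hτ a b := (hσ _ _).trans (hτ a b)
  one_mem' _ _ := rfl
  inv_mem' {σ} hσ a b := by simpa using (hσ (σ⁻¹ a) (σ⁻¹ b)).symm

lemma exists_perm_comp_eq_of_hammingNorm_eq {ι : Type*} [Fintype ι] {x y : ι → Bool}
    (h : hammingNorm x = hammingNorm y) : ∃ π : Equiv.Perm ι, y ∘ π = x := by
  have htrue : Fintype.card {i // x i = true} = Fintype.card {i // y i = true} := by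
    have hne (b : Bool) : b ≠ 0 ↔ b = true := by decide +revert
    simpa only [Fintype.card_subtype, hammingNorm, hne] using h
  have hfiber (b : Bool) : Fintype.card {i // x i = b} = Fintype.card {i // y i = b} := by
    cases b
    · simp only [← Bool.not_eq_true]
      rw [Fintype.card_subtype_compl, Fintype.card_subtype_compl, htrue]
    · exact htrue
  exact ⟨Equiv.ofFiberEquiv fun b => Fintype.equivOfCardEq (hfiber b),
    funext (Equiv.ofFiberEquiv_map _)⟩

section Hamming

variable {d : ℕ}

/- Mathlib makes `Bool` a Boolean ring, so `+` and `-` on `Cube d` are both coordinatewise xor. -/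

lemma hamm_eq_hammingNorm_sub (s t : Cube d) : hamm s t = hammingNorm (s - t) :=
  hammingDist_eq_hammingNorm s t

lemma hamm_add_right (a s t : Cube d) : hamm (s + a) (t + a) = hamm s t := by
  simp only [hamm_eq_hammingNorm_sub, add_sub_add_right_eq_sub]

lemma hamm_comp_perm (π : Equiv.Perm (Fin d)) (s t : Cube d) :
    hamm (s ∘ π) (t ∘ π) = hamm s t :=
  Finset.card_equiv π (by simp)

lemma addRight_mem_preservingSubgroup_hamm (a : Cube d) :
    Equiv.addRight a ∈ preservingSubgroup (hamm (d := d)) :=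
  hamm_add_right a

lemma arrowCongr_mem_preservingSubgroup_hamm (π : Equiv.Perm (Fin d)) :
    π.arrowCongr (Equiv.refl Bool) ∈ preservingSubgroup (hamm (d := d)) :=
  fun s t => hamm_comp_perm π.symm s t

lemma exists_mem_preservingSubgroup_hamm {s t s' t' : Cube d} (h : hamm s t = hamm s' t') :
    ∃ σ ∈ preservingSubgroup (hamm (d := d)), σ s = s' ∧ σ t = t' := by
  rw [hamm_eq_hammingNorm_sub, hamm_eq_hammingNorm_sub] at h
  obtain ⟨π, hπ⟩ := exists_perm_comp_eq_of_hammingNorm_eq h.symm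
  refine ⟨Equiv.addRight (s' - s ∘ π) * π.symm.arrowCongr (Equiv.refl Bool),
    mul_mem (addRight_mem_preservingSubgroup_hamm _)
      (arrowCongr_mem_preservingSubgroup_hamm _), ?_, ?_⟩
  · show s ∘ π + (s' - s ∘ π) = s'
    exact add_sub_cancel _ _
  · show t ∘ π + (s' - s ∘ π) = t'
    have hπ' : s ∘ π - t ∘ π = s' - t' := hπ
    linear_combination -hπ'

lemma smul_Kset {G : Type*} [Group G] [MulAction G (Cube d)] (g : G) : g • Kset d = Kset d := by
  rw [Kset, ← Finset.image_inr_smul, smul_finset_univ]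

lemma gCap_smul (g : preservingSubgroup (hamm (d := d))) (u v : Vtx d) :
    gCap d (g • u) (g • v) = gCap d u v := by
  have hg : ∀ s t : Cube d, hamm (g • s) (g • t) = hamm s t := g.2
  rcases u with s | s <;> rcases v with t | t <;>
    simp only [gCap, Sum.smul_inl, Sum.smul_inr, hg, smul_left_cancel_iff]

lemma hK_smul (g : preservingSubgroup (hamm (d := d))) (U : Finset (Cube d)) :
    hK d (g • U) = hK d U := by
  rw [hK, hK, Finset.image_inr_smul, termCut_smul (gCap_smul g) (smul_Kset g)]

end Hamming

/-- If `(G_d, K)` admits a cut-sparsifier of quality at most `α` (in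
particular if `α` is the minimum quality over all cut-sparsifiers), then it admits a
cut-sparsifier of quality at most `α` whose capacities depend only on the Hamming
distance between the endpoints. -/
theorem hamming_invariant_sparsifier (d : ℕ) (α : ℝ)
    (hex : ∃ cH : Cube d → Cube d → ℝ,
      (∀ s t, cH s t = cH t s) ∧ (∀ s t, 0 ≤ cH s t) ∧
      ∀ U : Finset (Cube d), hK d U ≤ cutFun cH U ∧ cutFun cH U ≤ α * hK d U) :
    ∃ cH : Cube d → Cube d → ℝ,
      (∀ s t, cH s t = cH t s) ∧ (∀ s t, 0 ≤ cH s t) ∧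
      (∀ U : Finset (Cube d), hK d U ≤ cutFun cH U ∧ cutFun cH U ≤ α * hK d U) ∧
      (∀ s t s' t' : Cube d, hamm s t = hamm s' t' → cH s t = cH s' t') := by
  classical
  obtain ⟨c, hsymm, hnonneg, hbounds⟩ := hex
  let G := preservingSubgroup (hamm (d := d))
  refine ⟨averageCap G c, averageCap_comm hsymm, averageCap_nonneg hnonneg, fun U => ?_,
    fun s t s' t' h => ?_⟩
  · rw [cutFun_averageCap]
    exact sum_div_card_mem_Icc fun g => hK_smul g U ▸ hbounds (g • U)
  · obtain ⟨σ, hσ, rfl, rfl⟩ := exists_mem_preservingSubgroup_hamm h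
    exact (averageCap_smul c (⟨σ, hσ⟩ : G) s t).symm
end
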